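/- For any prime p and n ≥ 1, the multiplicative order of R_n modulo p divides 4 times the Fibonacci entry point modulo p. -/
import Mathlib

/-- `R n` over `ZMod p`: the `n × n` matrix whose 1-based `(i,j)` entry is `C(i-1, n-j)`. -/
def RmatMod (p n : ℕ) : Matrix (Fin n) (Fin n) (ZMod p) :=
  Matrix.of fun i j => (Nat.choose i.1 (n - 1 - j.1) : ZMod p)

section aux

variable {S : Type*} [CommRing S]

/-- Generic version of `RmatMod` over any commutative ring. -/
def RmatC (S : Type*) [CommRing S] (n : ℕ) : Matrix (Fin n) (Fin n) S :=
  Matrix.of fun i j => (Nat.choose i.1 (n - 1 - j.1) : S)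

/-- The "symmetric power" vector `(a^{n-1-j} b^j)_j`. -/
def wvec (n : ℕ) (a b : S) : Fin n → S := fun j => a ^ (n - 1 - j.1) * b ^ j.1

lemma RmatC_mulVec (n : ℕ) (a b : S) :
    (RmatC S n).mulVec (wvec n a b) = wvec n b (a + b) := by
  funext i
  have hi : i.1 < n := i.2
  show ∑ j : Fin n, (Nat.choose i.1 (n - 1 - j.1) : S) * (a ^ (n - 1 - j.1) * b ^ j.1)
      = b ^ (n - 1 - i.1) * (a + b) ^ i.1
  rw [Fin.sum_univ_eq_sum_range
    (fun j => (Nat.choose i.1 (n - 1 - j) : S) * (a ^ (n - 1 - j) * b ^ j)) n]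
  have h1 : ∀ j ∈ Finset.range n,
      (Nat.choose i.1 (n - 1 - j) : S) * (a ^ (n - 1 - j) * b ^ j)
        = (fun k => (Nat.choose i.1 k : S) * (a ^ k * b ^ (n - 1 - k))) (n - 1 - j) := by
    intro j hj
    have hj' : n - 1 - (n - 1 - j) = j := by
      have := Finset.mem_range.mp hj; omega
    simp only [hj']
  rw [Finset.sum_congr rfl h1,
    Finset.sum_range_reflect (fun k => (Nat.choose i.1 k : S) * (a ^ k * b ^ (n - 1 - k))) n]
  rw [← Finset.sum_subset (Finset.range_subset_range.2 (show i.1 + 1 ≤ n by omega))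
      (fun k _ hk => by
        have hik : i.1 < k := by
          rcases Nat.lt_or_ge i.1 k with h | h
          · exact h
          · exact absurd (Finset.mem_range.mpr (by omega)) hk
        simp [Nat.choose_eq_zero_of_lt hik])]
  rw [add_pow, Finset.mul_sum]
  refine Finset.sum_congr rfl fun k hk => ?_
  have hk' : k ≤ i.1 := Nat.lt_succ_iff.mp (Finset.mem_range.mp hk)
  have hsplit : (n - 1 - i.1) + (i.1 - k) = n - 1 - k := by omega
  rw [← hsplit, pow_add]
  ring

lemma RmatC_pow_mulVec (n m : ℕ) (a b : S) :
    ((RmatC S n) ^ m).mulVec (wvec n a b)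
      = wvec n ((Nat.fib (m + 1) : S) * a + (Nat.fib m : S) * (b - a))
              ((Nat.fib m : S) * a + (Nat.fib (m + 1) : S) * b) := by
  induction m generalizing a b with
  | zero =>
      simp only [pow_zero, Matrix.one_mulVec, Nat.fib_one, Nat.fib_zero,
        Nat.cast_one, Nat.cast_zero]
      funext j
      simp [wvec]
  | succ m ih =>
      rw [pow_succ, ← Matrix.mulVec_mulVec, RmatC_mulVec, ih]
      have hf : (Nat.fib (m + 2) : S) = (Nat.fib (m + 1) : S) + (Nat.fib m : S) := by
        rw [Nat.fib_add_two]; push_cast; ring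
      have h1 : (Nat.fib (m + 1) : S) * b + (Nat.fib m : S) * ((a + b) - b)
          = (Nat.fib (m + 2) : S) * a + (Nat.fib (m + 1) : S) * (b - a) := by
        rw [hf]; ring
      have h2 : (Nat.fib m : S) * b + (Nat.fib (m + 1) : S) * (a + b)
          = (Nat.fib (m + 1) : S) * a + (Nat.fib (m + 2) : S) * b := by
        rw [hf]; ring
      rw [h1, h2]

end aux

/-- Cassini's identity. -/
lemma fib_cassini (m : ℕ) :
    (Nat.fib (m + 1) : ℤ) ^ 2 = (Nat.fib (m + 2) : ℤ) * (Nat.fib m : ℤ) + (-1) ^ m := by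
  induction m with
  | zero => simp
  | succ m ih =>
      show (Nat.fib (m + 2) : ℤ) ^ 2 = (Nat.fib (m + 3) : ℤ) * (Nat.fib (m + 1) : ℤ) + (-1) ^ (m + 1)
      have h2 : (Nat.fib (m + 3) : ℤ) = (Nat.fib (m + 1) : ℤ) + (Nat.fib (m + 2) : ℤ) := by
        rw [show m + 3 = (m + 1) + 2 from rfl, Nat.fib_add_two]; push_cast; ring
      have h3 : (Nat.fib (m + 2) : ℤ) = (Nat.fib m : ℤ) + (Nat.fib (m + 1) : ℤ) := by
        rw [Nat.fib_add_two]; push_cast; ring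
      rw [h2, show ((-1 : ℤ)) ^ (m + 1) = -(-1) ^ m from by ring]
      linear_combination (-1 : ℤ) * ih + (Nat.fib (m + 2) : ℤ) * h3

lemma fib_four_mul (p e : ℕ) [NeZero p] (hdvd : p ∣ Nat.fib e) :
    (Nat.fib (4 * e) : ZMod p) = 0 ∧ (Nat.fib (4 * e + 1) : ZMod p) = 1 := by
  have cast0 : ∀ k : ℕ, e ∣ k → (Nat.fib k : ZMod p) = 0 := fun k hk =>
    (CharP.cast_eq_zero_iff (ZMod p) p _).2 (hdvd.trans (Nat.fib_dvd _ _ hk))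
  have he0 : (Nat.fib e : ZMod p) = 0 := (CharP.cast_eq_zero_iff (ZMod p) p _).2 hdvd
  have h2e0 : (Nat.fib (2 * e) : ZMod p) = 0 := cast0 _ ⟨2, by ring⟩
  have h4e0 : (Nat.fib (4 * e) : ZMod p) = 0 := cast0 _ ⟨4, by ring⟩
  refine ⟨h4e0, ?_⟩
  -- c := fib (e+1); c^2 = (-1)^e in ZMod p by Cassini
  have hc2 : (Nat.fib (e + 1) : ZMod p) ^ 2 = (-1 : ZMod p) ^ e := by
    have := congrArg (fun z : ℤ => (z : ZMod p)) (fib_cassini e)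
    push_cast at this
    rw [he0, mul_zero, zero_add] at this
    exact this
  have hc4 : (Nat.fib (e + 1) : ZMod p) ^ 4 = 1 := by
    have : ((Nat.fib (e + 1) : ZMod p) ^ 2) ^ 2 = ((-1 : ZMod p) ^ e) ^ 2 := by rw [hc2]
    rw [← pow_mul, ← pow_mul, pow_mul' (-1 : ZMod p), neg_one_sq, one_pow] at this
    simpa using this
  -- fib (2e+1) = fib e ^2 + fib(e+1)^2
  have h2e1 : (Nat.fib (2 * e + 1) : ZMod p) = (Nat.fib (e + 1) : ZMod p) ^ 2 := by
    have := Nat.fib_add e e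
    have hcast := congrArg (fun k : ℕ => (k : ZMod p)) this
    push_cast at hcast
    rw [show e + e = 2 * e by ring] at hcast
    rw [hcast, he0]
    ring
  have h4e1 : (Nat.fib (4 * e + 1) : ZMod p) = (Nat.fib (2 * e + 1) : ZMod p) ^ 2 := by
    have := Nat.fib_add (2 * e) (2 * e)
    have hcast := congrArg (fun k : ℕ => (k : ZMod p)) this
    push_cast at hcast
    rw [show 2 * e + 2 * e = 4 * e by ring] at hcast
    rw [hcast, h2e0]
    ring
  rw [h4e1, h2e1, ← pow_mul]
  exact hc4

/-- The multiplicative order of `R_n` modulo the prime `p` divides `4` times the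
entry point of the Fibonacci sequence modulo `p`. -/
theorem Rmat_order_dvd (p n e : ℕ) (hp : p.Prime) (hn : 1 ≤ n)
    (he : 0 < e) (hdvd : p ∣ Nat.fib e)
    (hmin : ∀ m : ℕ, 0 < m → m < e → ¬ p ∣ Nat.fib m) :
    orderOf (RmatMod p n) ∣ 4 * e := by
  haveI : Fact p.Prime := ⟨hp⟩
  haveI : NeZero p := ⟨hp.ne_zero⟩
  apply orderOf_dvd_of_pow_eq_one
  have hR : RmatMod p n = RmatC (ZMod p) n := rfl
  rw [hR]
  obtain ⟨hfib0, hfib1⟩ := fib_four_mul p e hdvd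
  -- the map of the power
  have hmapR : (Polynomial.C.mapMatrix (RmatC (ZMod p) n)) = RmatC (Polynomial (ZMod p)) n := by
    refine Matrix.ext fun i j => ?_
    simp only [RingHom.mapMatrix_apply, Matrix.map_apply, RmatC, Matrix.of_apply]
    exact map_natCast Polynomial.C _
  have hmap : (Polynomial.C.mapMatrix ((RmatC (ZMod p) n) ^ (4 * e))) = (RmatC (Polynomial (ZMod p)) n) ^ (4 * e) := by
    rw [map_pow, hmapR]
  have key := RmatC_pow_mulVec (S := Polynomial (ZMod p)) n (4 * e) Polynomial.X 1
  rw [← hmap] at key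
  have c0 : ((Nat.fib (4 * e) : ℕ) : Polynomial (ZMod p)) = 0 := by
    rw [← map_natCast (Polynomial.C) (Nat.fib (4 * e)), hfib0, map_zero]
  have c1 : ((Nat.fib (4 * e + 1) : ℕ) : Polynomial (ZMod p)) = 1 := by
    rw [← map_natCast (Polynomial.C) (Nat.fib (4 * e + 1)), hfib1, map_one]
  rw [c0, c1] at key
  simp only [one_mul, zero_mul, add_zero, zero_add, mul_one] at key
  -- now key : (C.mapMatrix (RmatC (ZMod p) n ^ (4*e))).mulVec (wvec n X 1) = wvec n X 1
  set M := (RmatC (ZMod p) n) ^ (4 * e) with hM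
  refine Matrix.ext fun i j => ?_
  have hkey := congrFun key i
  simp only [Matrix.mulVec, dotProduct, RingHom.mapMatrix_apply, Matrix.map_apply,
    wvec, one_pow, mul_one] at hkey
  have hco := congrArg (fun q : Polynomial (ZMod p) => q.coeff (n - 1 - j.1)) hkey
  rw [Polynomial.finset_sum_coeff] at hco
  simp only [Polynomial.coeff_C_mul, Polynomial.coeff_X_pow,
    mul_ite, mul_one, mul_zero] at hco
  have hsum : (∑ j' : Fin n, if n - 1 - j.1 = n - 1 - j'.1 then M i j' else 0)
      = M i j := by
    rw [Finset.sum_eq_single j]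
    · simp
    · intro j' _ hj'
      have hc : ¬ (n - 1 - j.1 = n - 1 - j'.1) := by
        intro h
        apply hj'
        have hj1 : j.1 < n := j.2
        have hj2 : j'.1 < n := j'.2
        exact Fin.ext (by omega)
      simp [hc]
    · intro h
      exact absurd (Finset.mem_univ j) h
  rw [hsum] at hco
  rw [hco, Matrix.one_apply]
  have hi : i.1 < n := i.2
  have hj : j.1 < n := j.2
  by_cases hij : i = j
  · subst hij; simp
  · have hne : ¬ (n - 1 - j.1 = n - 1 - i.1) := by
      intro h
      exact hij (Fin.ext (by omega)).symm
    simp [hij, hne]
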